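/- Let r > 0, {v₀,v₁,w} a positive oriented orthonormal system, α(t) = √(1+r²) w + r cos(2πt) v₁ + r sin(2πt) v₀, and W₁(t) = α̇(t), W₂(t) = √(1+r²) v₁ + r cos(2πt) w, W₃(t) = √(1+r²) v₀ + r sin(2πt) w. Then for all t: (−D_t²+1)(W₁)(t) = (4π²(1+r²)+1) α̇(t); (−D_t²+1)(−2πr W₂)(t) = √(1+r²)(4π²r²+1) sin(2πt) α̇(t) + (1 − 4π²r²) cos(2πt) (α(t) ×ₘ α̇(t)); and (−D_t²+1)(−2πr W₃)(t) = −√(1+r²)(4π²r²+1) cos(2πt) α̇(t) + (1 − 4π²r²) sin(2πt) (α(t) ×ₘ α̇(t)). -/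

import Mathlib

noncomputable section

open Real

/-- The Minkowski inner product on ℝ³. -/
def mink (v w : Fin 3 → ℝ) : ℝ := v 0 * w 0 + v 1 * w 1 - v 2 * w 2

/-- The twisted cross product on ℝ³. -/
def mcross (v w : Fin 3 → ℝ) : Fin 3 → ℝ :=
  ![v 2 * w 1 - v 1 * w 2, v 0 * w 2 - v 2 * w 0, v 0 * w 1 - v 1 * w 0]

/-- A positive oriented orthonormal system with respect to the Minkowski metric. -/
def posOrth (v₀ v₁ w : Fin 3 → ℝ) : Prop :=
  mink v₀ v₁ = 0 ∧ mink v₀ w = 0 ∧ mink v₁ w = 0 ∧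
  mink v₀ v₀ = 1 ∧ mink v₁ v₁ = 1 ∧ mink w w = -1 ∧
  mcross v₀ v₁ = w

/-- Membership in the hyperbolic plane ℍ ⊂ ℝ³. -/
def inH (x : Fin 3 → ℝ) : Prop := x 2 ^ 2 - x 0 ^ 2 - x 1 ^ 2 = 1 ∧ 0 < x 2

/-- The covariant derivative on ℍ of a tangent vector field `V` along a curve `γ` in ℍ:
`D_t V(t) = V̇(t) + ⟨V̇(t), γ(t)⟩ₘ γ(t)`. -/
def covDt (γ V : ℝ → Fin 3 → ℝ) : ℝ → Fin 3 → ℝ :=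
  fun t => deriv V t + mink (deriv V t) (γ t) • γ t

/-!
Write `ρ = √(1 + r²)` and `N = cos(ωt) v₁ + sin(ωt) v₀` (here `ω = 2π`), so that `α = ρ w + r N`.
The unit tangent `T = N' / ω` and the unit normal `B = ρ N + r w` span the tangent planes of `ℍ`
along `α`, and `D_t T = -ωρ B`, `D_t B = ωρ T`. Hence `D_t` acts on coefficients in this rotating
frame by `D_t (f T + g B) = (f' + ωρ g) T + (g' - ωρ f) B`, and the three identities become
computations with trigonometric coefficients, once one notes `α̇ = ωr T`, `α ×ₘ α̇ = -ωr B`,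
`W₂ = cos(ωt) B - ρ sin(ωt) T` and `W₃ = sin(ωt) B + ρ cos(ωt) T` (the boost Killing fields of the
`w v₁`- and `w v₀`-planes along `α`).
-/

lemma mink_comm (v w : Fin 3 → ℝ) : mink v w = mink w v := by
  unfold mink; ring

lemma mink_add_left (u v w : Fin 3 → ℝ) : mink (u + v) w = mink u w + mink v w := by
  simp only [mink, Pi.add_apply]; ring

lemma mink_add_right (u v w : Fin 3 → ℝ) : mink u (v + w) = mink u v + mink u w := by
  rw [mink_comm, mink_add_left, mink_comm v, mink_comm w]

lemma mink_smul_left (a : ℝ) (v w : Fin 3 → ℝ) : mink (a • v) w = a * mink v w := by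
  simp only [mink, Pi.smul_apply, smul_eq_mul]; ring

lemma mink_smul_right (a : ℝ) (v w : Fin 3 → ℝ) : mink v (a • w) = a * mink v w := by
  rw [mink_comm, mink_smul_left, mink_comm]

lemma mink_neg_left (v w : Fin 3 → ℝ) : mink (-v) w = -mink v w := by
  simpa using mink_smul_left (-1) v w

lemma mcross_add_left (u v w : Fin 3 → ℝ) : mcross (u + v) w = mcross u w + mcross v w := by
  ext i; fin_cases i <;> simp [mcross] <;> ring

lemma mcross_add_right (u v w : Fin 3 → ℝ) : mcross u (v + w) = mcross u v + mcross u w := by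
  ext i; fin_cases i <;> simp [mcross] <;> ring

lemma mcross_smul_left (a : ℝ) (v w : Fin 3 → ℝ) : mcross (a • v) w = a • mcross v w := by
  ext i; fin_cases i <;> simp [mcross] <;> ring

lemma mcross_smul_right (a : ℝ) (v w : Fin 3 → ℝ) : mcross v (a • w) = a • mcross v w := by
  ext i; fin_cases i <;> simp [mcross] <;> ring

lemma mcross_neg_right (v w : Fin 3 → ℝ) : mcross v (-w) = -mcross v w := by
  simpa using mcross_smul_right (-1) v w

lemma mcross_self (v : Fin 3 → ℝ) : mcross v v = 0 := by
  ext i; fin_cases i <;> simp [mcross] <;> ring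

lemma mcross_swap (v w : Fin 3 → ℝ) : mcross w v = -mcross v w := by
  ext i; fin_cases i <;> simp [mcross] <;> ring

lemma mcross_mcross (u v w : Fin 3 → ℝ) :
    mcross (mcross u v) w = mink v w • u - mink u w • v := by
  ext i; fin_cases i <;> simp [mcross, mink] <;> ring

namespace posOrth

variable {v₀ v₁ w : Fin 3 → ℝ}

lemma mcross_w_v₀ (h : posOrth v₀ v₁ w) : mcross w v₀ = -v₁ := by
  obtain ⟨h01, -, -, h00, -, -, hw⟩ := h
  rw [← hw, mcross_mcross, mink_comm, h01, h00]; simp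

lemma mcross_w_v₁ (h : posOrth v₀ v₁ w) : mcross w v₁ = v₀ := by
  obtain ⟨h01, -, -, -, h11, -, hw⟩ := h
  rw [← hw, mcross_mcross, h11, h01]; simp

end posOrth

lemma hasDerivAt_mul_sin (a ω t : ℝ) :
    HasDerivAt (fun s => a * sin (ω * s)) (a * ω * cos (ω * t)) t :=
  ((hasDerivAt_const_mul ω).sin.const_mul a).congr_deriv (by ring)

lemma hasDerivAt_mul_cos (a ω t : ℝ) :
    HasDerivAt (fun s => a * cos (ω * s)) (-(a * ω) * sin (ω * t)) t :=
  ((hasDerivAt_const_mul ω).cos.const_mul a).congr_deriv (by ring)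

section circleVec

variable {E : Type*} [NormedAddCommGroup E] [NormedSpace ℝ E]

def circleVec (ω : ℝ) (a b : E) (t : ℝ) : E := cos (ω * t) • a + sin (ω * t) • b

lemma hasDerivAt_circleVec (ω : ℝ) (a b : E) (t : ℝ) :
    HasDerivAt (circleVec ω a b) (ω • circleVec ω b (-a) t) t :=
  (((hasDerivAt_const_mul ω).cos.smul_const a).fun_add
    ((hasDerivAt_const_mul ω).sin.smul_const b)).congr_deriv (by simp only [circleVec]; module)

lemma circleVec_neg (ω : ℝ) (a b : E) (t : ℝ) :
    circleVec ω (-a) (-b) t = -circleVec ω a b t := by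
  simp only [circleVec]; module

end circleVec

section minkCircleVec

variable {a b c : Fin 3 → ℝ} (ω t : ℝ)

lemma mink_circleVec_self (ha : mink a a = 1) (hb : mink b b = 1) (hab : mink a b = 0) :
    mink (circleVec ω a b t) (circleVec ω a b t) = 1 := by
  simp only [circleVec, mink_add_left, mink_add_right, mink_smul_left, mink_smul_right, ha, hb,
    hab, mink_comm b a]
  linear_combination sin_sq_add_cos_sq (ω * t)

lemma mink_circleVec_rotate (ha : mink a a = 1) (hb : mink b b = 1) (hab : mink a b = 0) :
    mink (circleVec ω a b t) (circleVec ω b (-a) t) = 0 := by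
  simp only [circleVec, mink_add_left, mink_add_right, mink_smul_left, mink_smul_right,
    mink_neg_left, mink_comm _ (-a), ha, hb, hab]
  ring

lemma mink_circleVec_left (hac : mink a c = 0) (hbc : mink b c = 0) :
    mink (circleVec ω a b t) c = 0 := by
  simp [circleVec, mink_add_left, mink_smul_left, hac, hbc]

end minkCircleVec

lemma covDt_of_hasDerivAt {γ V : ℝ → Fin 3 → ℝ} {V' : Fin 3 → ℝ} {t : ℝ}
    (h : HasDerivAt V V' t) : covDt γ V t = V' + mink V' (γ t) • γ t := by
  rw [covDt, h.deriv]

lemma covDt_add {γ V U : ℝ → Fin 3 → ℝ} {t : ℝ} (hV : DifferentiableAt ℝ V t)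
    (hU : DifferentiableAt ℝ U t) :
    covDt γ (fun s => V s + U s) t = covDt γ V t + covDt γ U t := by
  simp only [covDt, deriv_fun_add hV hU, mink_add_left, add_smul]
  abel

lemma covDt_smul {γ V : ℝ → Fin 3 → ℝ} {f : ℝ → ℝ} {t : ℝ} (hf : DifferentiableAt ℝ f t)
    (hV : DifferentiableAt ℝ V t) (hVγ : mink (V t) (γ t) = 0) :
    covDt γ (fun s => f s • V s) t = deriv f t • V t + f t • covDt γ V t := by
  simp only [covDt, deriv_fun_smul hf hV, mink_add_left, mink_smul_left, hVγ]
  module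

section RotatingFrame

variable {γ T B : ℝ → Fin 3 → ℝ} {κ : ℝ} {f g f' g' f'' g'' : ℝ → ℝ}

lemma covDt_rotatingFrame (hT : Differentiable ℝ T) (hB : Differentiable ℝ B)
    (hTγ : ∀ t, mink (T t) (γ t) = 0) (hBγ : ∀ t, mink (B t) (γ t) = 0)
    (hDT : ∀ t, covDt γ T t = -κ • B t) (hDB : ∀ t, covDt γ B t = κ • T t)
    (hf : ∀ t, HasDerivAt f (f' t) t) (hg : ∀ t, HasDerivAt g (g' t) t) :
    covDt γ (fun s => f s • T s + g s • B s) =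
      fun t => (f' t + κ * g t) • T t + (g' t - κ * f t) • B t := by
  funext t
  rw [covDt_add ((hf t).differentiableAt.fun_smul (hT t))
      ((hg t).differentiableAt.fun_smul (hB t)),
    covDt_smul (hf t).differentiableAt (hT t) (hTγ t),
    covDt_smul (hg t).differentiableAt (hB t) (hBγ t), (hf t).deriv, (hg t).deriv, hDT, hDB]
  module

lemma covDt_covDt_rotatingFrame (hT : Differentiable ℝ T) (hB : Differentiable ℝ B)
    (hTγ : ∀ t, mink (T t) (γ t) = 0) (hBγ : ∀ t, mink (B t) (γ t) = 0)
    (hDT : ∀ t, covDt γ T t = -κ • B t) (hDB : ∀ t, covDt γ B t = κ • T t)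
    (hf : ∀ t, HasDerivAt f (f' t) t) (hg : ∀ t, HasDerivAt g (g' t) t)
    (hf' : ∀ t, HasDerivAt f' (f'' t) t) (hg' : ∀ t, HasDerivAt g' (g'' t) t) :
    covDt γ (covDt γ (fun s => f s • T s + g s • B s)) =
      fun t => (f'' t + 2 * κ * g' t - κ ^ 2 * f t) • T t +
        (g'' t - 2 * κ * f' t - κ ^ 2 * g t) • B t := by
  rw [covDt_rotatingFrame hT hB hTγ hBγ hDT hDB hf hg,
    covDt_rotatingFrame hT hB hTγ hBγ hDT hDB (fun t => (hf' t).fun_add ((hg t).const_mul κ))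
      (fun t => (hg' t).fun_sub ((hf t).const_mul κ))]
  funext t
  module

end RotatingFrame

def oneSubCovDtSq (γ V : ℝ → Fin 3 → ℝ) (t : ℝ) : Fin 3 → ℝ :=
  -(covDt γ (covDt γ V) t) + V t

lemma sq_sqrt_one_add_sq (r : ℝ) : √(1 + r ^ 2) ^ 2 = 1 + r ^ 2 :=
  sq_sqrt (by positivity)

section HypCircle

def hypCircle (ω r : ℝ) (v₀ v₁ w : Fin 3 → ℝ) (t : ℝ) : Fin 3 → ℝ :=
  √(1 + r ^ 2) • w + (r * cos (ω * t)) • v₁ + (r * sin (ω * t)) • v₀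

def hypCircleTangent (ω : ℝ) (v₀ v₁ : Fin 3 → ℝ) : ℝ → Fin 3 → ℝ :=
  circleVec ω v₀ (-v₁)

def hypCircleNormal (ω r : ℝ) (v₀ v₁ w : Fin 3 → ℝ) (t : ℝ) : Fin 3 → ℝ :=
  √(1 + r ^ 2) • circleVec ω v₁ v₀ t + r • w

variable {v₀ v₁ w : Fin 3 → ℝ} (ω r : ℝ)

lemma hypCircle_eq (t : ℝ) :
    hypCircle ω r v₀ v₁ w t = √(1 + r ^ 2) • w + r • circleVec ω v₁ v₀ t := by
  simp only [hypCircle, circleVec]; module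

lemma hasDerivAt_hypCircle (t : ℝ) :
    HasDerivAt (hypCircle ω r v₀ v₁ w) ((ω * r) • hypCircleTangent ω v₀ v₁ t) t := by
  have h := ((hasDerivAt_circleVec ω v₁ v₀ t).const_smul r).const_add (√(1 + r ^ 2) • w)
  rw [funext (hypCircle_eq ω r)]
  exact h.congr_deriv (by rw [hypCircleTangent, smul_smul, mul_comm])

lemma hasDerivAt_hypCircleNormal (t : ℝ) :
    HasDerivAt (hypCircleNormal ω r v₀ v₁ w)
      ((ω * √(1 + r ^ 2)) • hypCircleTangent ω v₀ v₁ t) t :=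
  (((hasDerivAt_circleVec ω v₁ v₀ t).const_smul (√(1 + r ^ 2))).add_const (r • w)).congr_deriv
    (by rw [hypCircleTangent, smul_smul, mul_comm])

lemma hasDerivAt_hypCircleTangent (t : ℝ) :
    HasDerivAt (hypCircleTangent ω v₀ v₁) (-ω • circleVec ω v₁ v₀ t) t :=
  (hasDerivAt_circleVec ω v₀ (-v₁) t).congr_deriv (by rw [circleVec_neg, neg_smul, smul_neg])

namespace posOrth

variable {ω r}

lemma mink_circleVec_v₁_v₀_self (h : posOrth v₀ v₁ w) (t : ℝ) :
    mink (circleVec ω v₁ v₀ t) (circleVec ω v₁ v₀ t) = 1 := by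
  obtain ⟨h01, -, -, h00, h11, -, -⟩ := h
  exact mink_circleVec_self ω t h11 h00 (by rw [mink_comm, h01])

lemma mink_circleVec_v₁_v₀_w (h : posOrth v₀ v₁ w) (t : ℝ) :
    mink (circleVec ω v₁ v₀ t) w = 0 := by
  obtain ⟨-, h0w, h1w, -, -, -, -⟩ := h
  exact mink_circleVec_left ω t h1w h0w

lemma mink_hypCircleTangent_hypCircle (h : posOrth v₀ v₁ w) (t : ℝ) :
    mink (hypCircleTangent ω v₀ v₁ t) (hypCircle ω r v₀ v₁ w t) = 0 := by
  obtain ⟨h01, h0w, h1w, h00, h11, -, -⟩ := h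
  have hTw : mink (hypCircleTangent ω v₀ v₁ t) w = 0 :=
    mink_circleVec_left ω t h0w (by rw [mink_neg_left, h1w, neg_zero])
  have hTN : mink (hypCircleTangent ω v₀ v₁ t) (circleVec ω v₁ v₀ t) = 0 := by
    rw [hypCircleTangent, mink_comm]
    exact mink_circleVec_rotate ω t h11 h00 (by rw [mink_comm, h01])
  rw [hypCircle_eq, mink_add_right, mink_smul_right, mink_smul_right, hTw, hTN]
  ring

lemma mink_hypCircleNormal_hypCircle (h : posOrth v₀ v₁ w) (t : ℝ) :
    mink (hypCircleNormal ω r v₀ v₁ w t) (hypCircle ω r v₀ v₁ w t) = 0 := by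
  have hN := h.mink_circleVec_v₁_v₀_self (ω := ω) t
  have hNw := h.mink_circleVec_v₁_v₀_w (ω := ω) t
  obtain ⟨-, -, -, -, -, hww, -⟩ := h
  rw [hypCircleNormal, hypCircle_eq]
  simp only [mink_add_left, mink_add_right, mink_smul_left, mink_smul_right, mink_comm w, hN, hNw,
    hww]
  ring

lemma covDt_hypCircleTangent (h : posOrth v₀ v₁ w) (t : ℝ) :
    covDt (hypCircle ω r v₀ v₁ w) (hypCircleTangent ω v₀ v₁) t =
      -(ω * √(1 + r ^ 2)) • hypCircleNormal ω r v₀ v₁ w t := by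
  have hρ := sq_sqrt_one_add_sq r
  rw [covDt_of_hasDerivAt (hasDerivAt_hypCircleTangent ω t), hypCircleNormal, hypCircle_eq]
  simp only [mink_add_right, mink_smul_left, mink_smul_right, h.mink_circleVec_v₁_v₀_self,
    h.mink_circleVec_v₁_v₀_w]
  match_scalars
  · linear_combination ω * hρ
  · ring

lemma covDt_hypCircleNormal (h : posOrth v₀ v₁ w) (t : ℝ) :
    covDt (hypCircle ω r v₀ v₁ w) (hypCircleNormal ω r v₀ v₁ w) t =
      (ω * √(1 + r ^ 2)) • hypCircleTangent ω v₀ v₁ t := by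
  rw [covDt_of_hasDerivAt (hasDerivAt_hypCircleNormal ω r t), mink_smul_left,
    h.mink_hypCircleTangent_hypCircle, mul_zero, zero_smul, add_zero]

lemma mcross_hypCircle_hypCircleTangent (h : posOrth v₀ v₁ w) (t : ℝ) :
    mcross (hypCircle ω r v₀ v₁ w t) (hypCircleTangent ω v₀ v₁ t) =
      -hypCircleNormal ω r v₀ v₁ w t := by
  have hw0 := h.mcross_w_v₀
  have hw1 := h.mcross_w_v₁
  obtain ⟨-, -, -, -, -, -, h01⟩ := h
  have h10 : mcross v₁ v₀ = -w := by rw [mcross_swap, h01]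
  rw [hypCircle_eq, hypCircleTangent, hypCircleNormal]
  simp only [circleVec, mcross_add_left, mcross_add_right, mcross_smul_left, mcross_smul_right,
    mcross_neg_right, mcross_self, hw0, hw1, h01, h10]
  match_scalars
  · ring
  · linear_combination -r * sin_sq_add_cos_sq (ω * t)
  · ring

variable {f g f' g' f'' g'' : ℝ → ℝ}

lemma covDt_covDt_hypCircle (h : posOrth v₀ v₁ w)
    (hf : ∀ t, HasDerivAt f (f' t) t) (hg : ∀ t, HasDerivAt g (g' t) t)
    (hf' : ∀ t, HasDerivAt f' (f'' t) t) (hg' : ∀ t, HasDerivAt g' (g'' t) t) :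
    covDt (hypCircle ω r v₀ v₁ w) (covDt (hypCircle ω r v₀ v₁ w)
      (fun s => f s • hypCircleTangent ω v₀ v₁ s + g s • hypCircleNormal ω r v₀ v₁ w s)) =
      fun t => (f'' t + 2 * (ω * √(1 + r ^ 2)) * g' t - (ω * √(1 + r ^ 2)) ^ 2 * f t) •
          hypCircleTangent ω v₀ v₁ t +
        (g'' t - 2 * (ω * √(1 + r ^ 2)) * f' t - (ω * √(1 + r ^ 2)) ^ 2 * g t) •
          hypCircleNormal ω r v₀ v₁ w t :=
  covDt_covDt_rotatingFrame (fun t => (hasDerivAt_hypCircleTangent ω t).differentiableAt)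
    (fun t => (hasDerivAt_hypCircleNormal ω r t).differentiableAt) h.mink_hypCircleTangent_hypCircle
    h.mink_hypCircleNormal_hypCircle h.covDt_hypCircleTangent h.covDt_hypCircleNormal hf hg hf' hg'

lemma oneSubCovDtSq_hypCircle_deriv (h : posOrth v₀ v₁ w) (t : ℝ) :
    oneSubCovDtSq (hypCircle ω r v₀ v₁ w) (fun s => deriv (hypCircle ω r v₀ v₁ w) s) t =
      (ω ^ 2 * (1 + r ^ 2) + 1) • deriv (hypCircle ω r v₀ v₁ w) t := by
  have hρ := sq_sqrt_one_add_sq r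
  have hα := fun s => (hasDerivAt_hypCircle ω r (v₀ := v₀) (v₁ := v₁) (w := w) s).deriv
  have hV : (fun s => deriv (hypCircle ω r v₀ v₁ w) s) =
      fun s => (ω * r) • hypCircleTangent ω v₀ v₁ s + (0 : ℝ) • hypCircleNormal ω r v₀ v₁ w s := by
    funext s; rw [hα, zero_smul, add_zero]
  rw [oneSubCovDtSq, hV, h.covDt_covDt_hypCircle (fun _ => hasDerivAt_const _ _)
    (fun _ => hasDerivAt_const _ _) (fun _ => hasDerivAt_const _ _)
    (fun _ => hasDerivAt_const _ _), hα]
  match_scalars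
  · linear_combination ω ^ 3 * r * hρ
  · ring

lemma oneSubCovDtSq_hypCircle_boost_v₁ (h : posOrth v₀ v₁ w) (t : ℝ) :
    oneSubCovDtSq (hypCircle ω r v₀ v₁ w)
        (fun s => (-(ω * r)) • (√(1 + r ^ 2) • v₁ + (r * cos (ω * s)) • w)) t =
      (√(1 + r ^ 2) * (ω ^ 2 * r ^ 2 + 1) * sin (ω * t)) • deriv (hypCircle ω r v₀ v₁ w) t +
        ((1 - ω ^ 2 * r ^ 2) * cos (ω * t)) •
          mcross (hypCircle ω r v₀ v₁ w t) (deriv (hypCircle ω r v₀ v₁ w) t) := by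
  have hρ := sq_sqrt_one_add_sq r
  have hV : (fun s => (-(ω * r)) • (√(1 + r ^ 2) • v₁ + (r * cos (ω * s)) • w)) =
      fun s => (ω * r * √(1 + r ^ 2) * sin (ω * s)) • hypCircleTangent ω v₀ v₁ s +
        (-(ω * r) * cos (ω * s)) • hypCircleNormal ω r v₀ v₁ w s := by
    funext s
    simp only [hypCircleTangent, hypCircleNormal, circleVec]
    match_scalars
    · linear_combination ω * r * √(1 + r ^ 2) * sin_sq_add_cos_sq (ω * s)
    · ring
    · ring
  rw [hV, oneSubCovDtSq, h.covDt_covDt_hypCircle (hasDerivAt_mul_sin _ ω) (hasDerivAt_mul_cos _ ω)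
    (hasDerivAt_mul_cos _ ω) (hasDerivAt_mul_sin _ ω), (hasDerivAt_hypCircle ω r t).deriv,
    mcross_smul_right, h.mcross_hypCircle_hypCircleTangent]
  match_scalars
  · linear_combination ω ^ 3 * r * √(1 + r ^ 2) * sin (ω * t) * hρ
  · linear_combination ω ^ 3 * r * cos (ω * t) * hρ

lemma oneSubCovDtSq_hypCircle_boost_v₀ (h : posOrth v₀ v₁ w) (t : ℝ) :
    oneSubCovDtSq (hypCircle ω r v₀ v₁ w)
        (fun s => (-(ω * r)) • (√(1 + r ^ 2) • v₀ + (r * sin (ω * s)) • w)) t =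
      (-(√(1 + r ^ 2) * (ω ^ 2 * r ^ 2 + 1) * cos (ω * t))) • deriv (hypCircle ω r v₀ v₁ w) t +
        ((1 - ω ^ 2 * r ^ 2) * sin (ω * t)) •
          mcross (hypCircle ω r v₀ v₁ w t) (deriv (hypCircle ω r v₀ v₁ w) t) := by
  have hρ := sq_sqrt_one_add_sq r
  have hV : (fun s => (-(ω * r)) • (√(1 + r ^ 2) • v₀ + (r * sin (ω * s)) • w)) =
      fun s => (-(ω * r * √(1 + r ^ 2)) * cos (ω * s)) • hypCircleTangent ω v₀ v₁ s +
        (-(ω * r) * sin (ω * s)) • hypCircleNormal ω r v₀ v₁ w s := by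
    funext s
    simp only [hypCircleTangent, hypCircleNormal, circleVec]
    match_scalars
    · linear_combination ω * r * √(1 + r ^ 2) * sin_sq_add_cos_sq (ω * s)
    · ring
    · ring
  rw [hV, oneSubCovDtSq, h.covDt_covDt_hypCircle (hasDerivAt_mul_cos _ ω) (hasDerivAt_mul_sin _ ω)
    (hasDerivAt_mul_sin _ ω) (hasDerivAt_mul_cos _ ω), (hasDerivAt_hypCircle ω r t).deriv,
    mcross_smul_right, h.mcross_hypCircle_hypCircleTangent]
  match_scalars
  · linear_combination -(ω ^ 3 * r * √(1 + r ^ 2) * cos (ω * t)) * hρ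
  · linear_combination ω ^ 3 * r * sin (ω * t) * hρ

end posOrth

end HypCircle

theorem stmt_15_general (r : ℝ) (v₀ v₁ w : Fin 3 → ℝ) (hsys : posOrth v₀ v₁ w) :
    let α : ℝ → Fin 3 → ℝ := fun t =>
      Real.sqrt (1 + r ^ 2) • w + (r * Real.cos (2 * Real.pi * t)) • v₁ +
        (r * Real.sin (2 * Real.pi * t)) • v₀
    let W₁ : ℝ → Fin 3 → ℝ := fun t => deriv α t
    let W₂ : ℝ → Fin 3 → ℝ := fun t =>
      Real.sqrt (1 + r ^ 2) • v₁ + (r * Real.cos (2 * Real.pi * t)) • w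
    let W₃ : ℝ → Fin 3 → ℝ := fun t =>
      Real.sqrt (1 + r ^ 2) • v₀ + (r * Real.sin (2 * Real.pi * t)) • w
    ∀ t : ℝ,
      -(covDt α (covDt α W₁) t) + W₁ t =
        (4 * Real.pi ^ 2 * (1 + r ^ 2) + 1) • deriv α t ∧
      -(covDt α (covDt α (fun s => (-(2 * Real.pi * r)) • W₂ s)) t) +
          (-(2 * Real.pi * r)) • W₂ t =
        (Real.sqrt (1 + r ^ 2) * (4 * Real.pi ^ 2 * r ^ 2 + 1) * Real.sin (2 * Real.pi * t)) •
            deriv α t +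
          ((1 - 4 * Real.pi ^ 2 * r ^ 2) * Real.cos (2 * Real.pi * t)) •
            mcross (α t) (deriv α t) ∧
      -(covDt α (covDt α (fun s => (-(2 * Real.pi * r)) • W₃ s)) t) +
          (-(2 * Real.pi * r)) • W₃ t =
        (-(Real.sqrt (1 + r ^ 2) * (4 * Real.pi ^ 2 * r ^ 2 + 1) * Real.cos (2 * Real.pi * t))) •
            deriv α t +
          ((1 - 4 * Real.pi ^ 2 * r ^ 2) * Real.sin (2 * Real.pi * t)) •
            mcross (α t) (deriv α t) := by
  intro α W₁ W₂ W₃ t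
  have h₁ := hsys.oneSubCovDtSq_hypCircle_deriv (ω := 2 * π) (r := r) t
  have h₂ := hsys.oneSubCovDtSq_hypCircle_boost_v₁ (ω := 2 * π) (r := r) t
  have h₃ := hsys.oneSubCovDtSq_hypCircle_boost_v₀ (ω := 2 * π) (r := r) t
  rw [mul_pow, show (2 : ℝ) ^ 2 = 4 by norm_num] at h₁ h₂ h₃
  exact ⟨h₁, h₂, h₃⟩

/-- the action of (−D_t² + 1) on W₁, −2πr W₂ and −2πr W₃. -/
theorem stmt_15 (r : ℝ) (hr : 0 < r) (v₀ v₁ w : Fin 3 → ℝ) (hsys : posOrth v₀ v₁ w) :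
    let α : ℝ → Fin 3 → ℝ := fun t =>
      Real.sqrt (1 + r ^ 2) • w + (r * Real.cos (2 * Real.pi * t)) • v₁ +
        (r * Real.sin (2 * Real.pi * t)) • v₀
    let W₁ : ℝ → Fin 3 → ℝ := fun t => deriv α t
    let W₂ : ℝ → Fin 3 → ℝ := fun t =>
      Real.sqrt (1 + r ^ 2) • v₁ + (r * Real.cos (2 * Real.pi * t)) • w
    let W₃ : ℝ → Fin 3 → ℝ := fun t =>
      Real.sqrt (1 + r ^ 2) • v₀ + (r * Real.sin (2 * Real.pi * t)) • w
    ∀ t : ℝ,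
      -(covDt α (covDt α W₁) t) + W₁ t =
        (4 * Real.pi ^ 2 * (1 + r ^ 2) + 1) • deriv α t ∧
      -(covDt α (covDt α (fun s => (-(2 * Real.pi * r)) • W₂ s)) t) +
          (-(2 * Real.pi * r)) • W₂ t =
        (Real.sqrt (1 + r ^ 2) * (4 * Real.pi ^ 2 * r ^ 2 + 1) * Real.sin (2 * Real.pi * t)) •
            deriv α t +
          ((1 - 4 * Real.pi ^ 2 * r ^ 2) * Real.cos (2 * Real.pi * t)) •
            mcross (α t) (deriv α t) ∧
      -(covDt α (covDt α (fun s => (-(2 * Real.pi * r)) • W₃ s)) t) +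
          (-(2 * Real.pi * r)) • W₃ t =
        (-(Real.sqrt (1 + r ^ 2) * (4 * Real.pi ^ 2 * r ^ 2 + 1) * Real.cos (2 * Real.pi * t))) •
            deriv α t +
          ((1 - 4 * Real.pi ^ 2 * r ^ 2) * Real.sin (2 * Real.pi * t)) •
            mcross (α t) (deriv α t) :=
  stmt_15_general r v₀ v₁ w hsys
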